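/- (Hardy–Littlewood inequality) For non-negative integrable functions μ, ν on ℝⁿ, ∫_{ℝⁿ} μ(x) ν(x) dx ≤ ∫_{ℝⁿ} μ^σ(x) ν^σ(x) dx, where f^σ denotes the symmetric decreasing rearrangement of f. -/

import Mathlib

/-!
Applying the layer-cake formula twice (the second time against the measure `g dx`) gives
`∫ f g = ∫₀^∞ ∫₀^∞ |{f > s} ∩ {g > t}| dt ds` for non-negative `f` and `g`.
The measure of `{μ > s} ∩ {ν > t}` is at most the smaller of `|{μ > s}|` and `|{ν > t}|`.
The rearrangements have level sets of the same measures, and since these are centred balls they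
are nested, so the intersection of the rearranged level sets has exactly that smaller measure.
-/

open MeasureTheory Set

def SymmUnimodal {n : ℕ} (f : EuclideanSpace ℝ (Fin n) → ℝ) : Prop :=
  ∃ φ : ℝ → ℝ, AntitoneOn φ (Set.Ici 0) ∧ ∀ x, f x = φ ‖x‖

/-- `fσ` is the symmetric decreasing rearrangement of `f`: it is radially
non-increasing, lower semicontinuous, and equimeasurable with `f`. -/
def IsSDR {n : ℕ} (f fσ : EuclideanSpace ℝ (Fin n) → ℝ) : Prop :=
  SymmUnimodal fσ ∧ LowerSemicontinuous fσ ∧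
    ∀ t : ℝ, 0 < t → volume {x | t < fσ x} = volume {x | t < f x}

section LayerCake

variable {α : Type*} [MeasurableSpace α]

theorem lintegral_ofReal_eq_lintegral_measure_lt (μ : Measure α) {f : α → ℝ}
    (hf : AEMeasurable f μ) :
    ∫⁻ x, ENNReal.ofReal (f x) ∂μ = ∫⁻ t in Ioi 0, μ {x | t < f x} := by
  have key := lintegral_eq_lintegral_meas_lt μ (f := fun x => max (f x) 0)
    (ae_of_all _ fun _ => le_max_right _ _) (hf.sup aemeasurable_const)
  simp only [ENNReal.ofReal_max, ENNReal.ofReal_zero, zero_le, max_eq_left] at key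
  rw [key]
  refine setLIntegral_congr_fun measurableSet_Ioi fun t (ht : 0 < t) => ?_
  simp only [lt_max_iff, ht.not_gt, or_false]

theorem lintegral_ofReal_mul_ofReal_eq_lintegral_lintegral_measure_inter (μ : Measure α)
    {f g : α → ℝ} (hf : AEMeasurable f μ) (hg : AEMeasurable g μ) :
    ∫⁻ x, ENNReal.ofReal (f x) * ENNReal.ofReal (g x) ∂μ
      = ∫⁻ s in Ioi 0, ∫⁻ t in Ioi 0, μ ({x | s < f x} ∩ {x | t < g x}) := by
  have hρ : ∫⁻ x, ENNReal.ofReal (f x) * ENNReal.ofReal (g x) ∂μ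
      = ∫⁻ x, ENNReal.ofReal (f x) ∂μ.withDensity fun x => ENNReal.ofReal (g x) := by
    simp_rw [mul_comm (ENNReal.ofReal (f _))]
    exact (lintegral_withDensity_eq_lintegral_mul₀ hg.ennreal_ofReal
      hf.ennreal_ofReal).symm
  rw [hρ, lintegral_ofReal_eq_lintegral_measure_lt _
    (hf.mono_ac (withDensity_absolutelyContinuous _ _))]
  refine lintegral_congr fun s => ?_
  have hs : NullMeasurableSet {x | s < f x} μ := nullMeasurableSet_lt aemeasurable_const hf
  rw [withDensity_apply₀ _ hs, lintegral_ofReal_eq_lintegral_measure_lt _ hg.restrict]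
  simp only [Measure.restrict_apply₀' hs, inter_comm]

end LayerCake

theorem ENNReal.ofReal_mul_ofReal_le (a b : ℝ) :
    ENNReal.ofReal a * ENNReal.ofReal b ≤ ENNReal.ofReal (a * b) := by
  rcases le_total 0 a with ha | ha
  · rw [ENNReal.ofReal_mul ha]
  · simp [ENNReal.ofReal_of_nonpos ha]

theorem measure_inter_eq_min_of_subset_or {α : Type*} [MeasurableSpace α] (μ : Measure α)
    {s t : Set α} (h : s ⊆ t ∨ t ⊆ s) : μ (s ∩ t) = min (μ s) (μ t) := by
  rcases h with h | h
  · rw [inter_eq_left.mpr h, min_eq_left (measure_mono h)]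
  · rw [inter_eq_right.mpr h, min_eq_right (measure_mono h)]

section Rearrangement

variable {n : ℕ} {f g fσ gσ : EuclideanSpace ℝ (Fin n) → ℝ}

theorem SymmUnimodal.le_of_norm_le (hf : SymmUnimodal f) {x y : EuclideanSpace ℝ (Fin n)}
    (h : ‖y‖ ≤ ‖x‖) : f x ≤ f y := by
  obtain ⟨φ, hφ, hfφ⟩ := hf
  rw [hfφ, hfφ]
  exact hφ (norm_nonneg y) (norm_nonneg x) h

theorem SymmUnimodal.superlevel_subset_or (hf : SymmUnimodal f) (hg : SymmUnimodal g)
    (s t : ℝ) : {x | s < f x} ⊆ {x | t < g x} ∨ {x | t < g x} ⊆ {x | s < f x} := by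
  by_contra! h
  obtain ⟨⟨x, hfx, hgx⟩, ⟨y, hgy, hfy⟩⟩ := And.imp not_subset.mp not_subset.mp h
  rcases le_total ‖x‖ ‖y‖ with hxy | hyx
  · exact hgx (hgy.trans_le (hg.le_of_norm_le hxy))
  · exact hfy (hfx.trans_le (hf.le_of_norm_le hyx))

theorem IsSDR.measure_inter_superlevel_le (hf : IsSDR f fσ) (hg : IsSDR g gσ)
    {s t : ℝ} (hs : 0 < s) (ht : 0 < t) :
    volume ({x | s < f x} ∩ {x | t < g x}) ≤ volume ({x | s < fσ x} ∩ {x | t < gσ x}) :=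
  calc volume ({x | s < f x} ∩ {x | t < g x})
      ≤ min (volume {x | s < f x}) (volume {x | t < g x}) :=
        le_min (measure_mono inter_subset_left) (measure_mono inter_subset_right)
    _ = min (volume {x | s < fσ x}) (volume {x | t < gσ x}) := by
        rw [hf.2.2 s hs, hg.2.2 t ht]
    _ = volume ({x | s < fσ x} ∩ {x | t < gσ x}) :=
        (measure_inter_eq_min_of_subset_or _ (hf.1.superlevel_subset_or hg.1 s t)).symm

end Rearrangement

theorem stmt5_general {n : ℕ} (μ ν μσ νσ : EuclideanSpace ℝ (Fin n) → ℝ)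
    (hμnn : ∀ x, 0 ≤ μ x)
    (hμint : Integrable μ) (hνint : Integrable ν)
    (hμσ : IsSDR μ μσ) (hνσ : IsSDR ν νσ) :
    ∫⁻ x, ENNReal.ofReal (μ x * ν x) ≤ ∫⁻ x, ENNReal.ofReal (μσ x * νσ x) :=
  calc ∫⁻ x, ENNReal.ofReal (μ x * ν x)
      = ∫⁻ x, ENNReal.ofReal (μ x) * ENNReal.ofReal (ν x) :=
        lintegral_congr fun x => ENNReal.ofReal_mul (hμnn x)
    _ = ∫⁻ s in Ioi 0, ∫⁻ t in Ioi 0, volume ({x | s < μ x} ∩ {x | t < ν x}) :=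
        lintegral_ofReal_mul_ofReal_eq_lintegral_lintegral_measure_inter _
          hμint.aemeasurable hνint.aemeasurable
    _ ≤ ∫⁻ s in Ioi 0, ∫⁻ t in Ioi 0, volume ({x | s < μσ x} ∩ {x | t < νσ x}) :=
        setLIntegral_mono' measurableSet_Ioi fun _ hs =>
          setLIntegral_mono' measurableSet_Ioi fun _ ht =>
            hμσ.measure_inter_superlevel_le hνσ hs ht
    _ = ∫⁻ x, ENNReal.ofReal (μσ x) * ENNReal.ofReal (νσ x) :=
        (lintegral_ofReal_mul_ofReal_eq_lintegral_lintegral_measure_inter _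
          hμσ.2.1.measurable.aemeasurable hνσ.2.1.measurable.aemeasurable).symm
    _ ≤ ∫⁻ x, ENNReal.ofReal (μσ x * νσ x) :=
        lintegral_mono fun _ => ENNReal.ofReal_mul_ofReal_le _ _

theorem stmt5 {n : ℕ} (μ ν μσ νσ : EuclideanSpace ℝ (Fin n) → ℝ)
    (hμnn : ∀ x, 0 ≤ μ x) (hνnn : ∀ x, 0 ≤ ν x)
    (hμint : Integrable μ) (hνint : Integrable ν)
    (hμσ : IsSDR μ μσ) (hνσ : IsSDR ν νσ) :
    ∫⁻ x, ENNReal.ofReal (μ x * ν x) ≤ ∫⁻ x, ENNReal.ofReal (μσ x * νσ x) :=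
  stmt5_general μ ν μσ νσ hμnn hμint hνint hμσ hνσ
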